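/- arXiv:1505.02273 — 5 statements merged into one kernel-verified Lean document; each statement's English description precedes it below -/
import Mathlib

section
/- Let psi(p,q) = (1/3)(a p^3 + 3b p^2 q + 3c p q^2 + d q^3). If p, q : ℝ → ℝ are differentiable and satisfy the Hamilton equations -p' = ∂psi/∂q and q' = ∂psi/∂p along a curve, then p'' = 2 F p and q'' = 2 F q, where F = (b^2 - ac) p^2 + (bc - ad) p q + (c^2 - bd) q^2. -/
/-!
`F` is minus the Hessian covariant of the binary cubic `3 psi`. Differentiating the Hamilton
equations once more by the chain rule and substituting them back, `p''` and `q''` become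
polynomials in `p, q`, equal to `2 F p` and `2 F q` by a direct computation.
-/

def binaryQuadratic (α β γ x y : ℝ) : ℝ := α * x ^ 2 + 2 * β * x * y + γ * y ^ 2

theorem HasDerivAt.binaryQuadratic {p q : ℝ → ℝ} {p' q' t : ℝ} (hp : HasDerivAt p p' t)
    (hq : HasDerivAt q q' t) (α β γ : ℝ) :
    HasDerivAt (fun s => binaryQuadratic α β γ (p s) (q s))
      (2 * (α * p t + β * q t) * p' + 2 * (β * p t + γ * q t) * q') t := by
  have hf : (fun s => _root_.binaryQuadratic α β γ (p s) (q s))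
      = fun s => α * p s ^ 2 + 2 * β * (p s * q s) + γ * q s ^ 2 := by
    funext s; rw [_root_.binaryQuadratic]; ring
  rw [hf]
  refine ((((hp.fun_pow 2).const_mul α).fun_add ((hp.fun_mul hq).const_mul (2 * β))).fun_add
    ((hq.fun_pow 2).const_mul γ)).congr_deriv ?_
  norm_num; ring

theorem cubic_second_order_general (a b c d : ℝ) (p q : ℝ → ℝ)
    (hp1 : Differentiable ℝ p) (hq1 : Differentiable ℝ q)
    (hp : ∀ t, deriv p t = -(b*(p t)^2 + 2*c*(p t)*(q t) + d*(q t)^2))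
    (hq : ∀ t, deriv q t = a*(p t)^2 + 2*b*(p t)*(q t) + c*(q t)^2) :
    ∀ t, deriv (deriv p) t
        = 2 * ((b^2 - a*c)*(p t)^2 + (b*c - a*d)*(p t)*(q t) + (c^2 - b*d)*(q t)^2) * p t
      ∧ deriv (deriv q) t
        = 2 * ((b^2 - a*c)*(p t)^2 + (b*c - a*d)*(p t)*(q t) + (c^2 - b*d)*(q t)^2) * q t := by
  have hp_eq : deriv p = fun s => -binaryQuadratic b c d (p s) (q s) := funext hp
  have hq_eq : deriv q = fun s => binaryQuadratic a b c (p s) (q s) := funext hq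
  intro t
  have hpt : HasDerivAt p (-binaryQuadratic b c d (p t) (q t)) t :=
    (hp1 t).hasDerivAt.congr_deriv (hp t)
  have hqt : HasDerivAt q (binaryQuadratic a b c (p t) (q t)) t :=
    (hq1 t).hasDerivAt.congr_deriv (hq t)
  constructor
  · rw [hp_eq, (hpt.binaryQuadratic hqt b c d).fun_neg.deriv]
    simp only [binaryQuadratic]; ring
  · rw [hq_eq, (hpt.binaryQuadratic hqt a b c).deriv]
    simp only [binaryQuadratic]; ring

theorem cubic_second_order (a b c d : ℝ) (p q : ℝ → ℝ)
    (hp1 : Differentiable ℝ p) (hq1 : Differentiable ℝ q)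
    (hp2 : Differentiable ℝ (deriv p)) (hq2 : Differentiable ℝ (deriv q))
    (hp : ∀ t, deriv p t = -(b*(p t)^2 + 2*c*(p t)*(q t) + d*(q t)^2))
    (hq : ∀ t, deriv q t = a*(p t)^2 + 2*b*(p t)*(q t) + c*(q t)^2) :
    ∀ t, deriv (deriv p) t
        = 2 * ((b^2 - a*c)*(p t)^2 + (b*c - a*d)*(p t)*(q t) + (c^2 - b*d)*(q t)^2) * p t
      ∧ deriv (deriv q) t
        = 2 * ((b^2 - a*c)*(p t)^2 + (b*c - a*d)*(p t)*(q t) + (c^2 - b*d)*(q t)^2) * q t :=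
  cubic_second_order_general a b c d p q hp1 hq1 hp hq
end

section
/- Let p, q : ℝ → ℝ satisfy the Hamilton equations p' = -(b p^2 + 2c p q + d q^2), q' = a p^2 + 2b p q + c q^2, and define F(t) = (b^2 - ac) p(t)^2 + (bc - ad) p(t) q(t) + (c^2 - bd) q(t)^2. Then F'(t) equals -J(p(t), q(t)), where J = (2b^3 + a^2 d - 3abc) p^3 + 3(abd + b^2 c - 2ac^2) p^2 q + 3(2b^2 d - bc^2 - acd) p q^2 + (3bcd - ad^2 - 2c^3) q^3 is the cubic covariant of U = a p^3 + 3b p^2 q + 3c p q^2 + d q^3. -/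
/-! The system is the Hamiltonian flow of `U / 3` and `F = -Hess(U) / 36`, so `F'` is the
Poisson bracket `{F, U / 3}`, i.e. a multiple of the Jacobian of `U` and its Hessian: the cubic
covariant. Concretely, once the chain rule is applied the claim is a polynomial identity. -/

theorem HasDerivAt.binary_quadratic {𝕜 𝔸 : Type*} [NontriviallyNormedField 𝕜]
    [NormedCommRing 𝔸] [NormedAlgebra 𝕜 𝔸] {A B C p' q' : 𝔸} {t : 𝕜} {p q : 𝕜 → 𝔸}
    (hp : HasDerivAt p p' t) (hq : HasDerivAt q q' t) :
    HasDerivAt (fun t => A * p t ^ 2 + B * p t * q t + C * q t ^ 2)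
      ((2 * A * p t + B * q t) * p' + (B * p t + 2 * C * q t) * q') t := by
  refine ((((hp.fun_pow 2).const_mul A).add ((hp.const_mul B).fun_mul hq)).add
    ((hq.fun_pow 2).const_mul C)).congr_deriv ?_
  ring

theorem cubic_F_deriv (a b c d : ℝ) (p q : ℝ → ℝ)
    (hp1 : Differentiable ℝ p) (hq1 : Differentiable ℝ q)
    (hp : ∀ t, deriv p t = -(b*(p t)^2 + 2*c*(p t)*(q t) + d*(q t)^2))
    (hq : ∀ t, deriv q t = a*(p t)^2 + 2*b*(p t)*(q t) + c*(q t)^2) :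
    ∀ t, deriv (fun t =>
        (b^2 - a*c)*(p t)^2 + (b*c - a*d)*(p t)*(q t) + (c^2 - b*d)*(q t)^2) t
      = -((2*b^3 + a^2*d - 3*a*b*c)*(p t)^3 + 3*(a*b*d + b^2*c - 2*a*c^2)*(p t)^2*(q t)
        + 3*(2*b^2*d - b*c^2 - a*c*d)*(p t)*(q t)^2 + (3*b*c*d - a*d^2 - 2*c^3)*(q t)^3) := by
  intro t
  rw [((hp1 t).hasDerivAt.binary_quadratic (hq1 t).hasDerivAt).deriv, hp t, hq t]
  ring
end

section
/- Let p, q : ℝ → ℝ satisfy the Hamilton equations p' = -(b p^2 + 2c p q + d q^2), q' = a p^2 + 2b p q + c q^2, let F = (b^2 - ac) p^2 + (bc - ad) p q + (c^2 - bd) q^2 along the curve, let psi = (1/3)(a p^3 + 3b p^2 q + 3c p q^2 + d q^3), and let D = a^2 d^2 - 3b^2 c^2 + 4ac^3 + 4b^3 d - 6abcd be the discriminant. Then F satisfies the differential equation (F')^2 = 4 F^3 + D (3 psi)^2 along the curve; that is, (F')^2 = 4 F^3 - g_3 where g_3 = -D (3 psi)^2. -/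
/-!
The Hamilton equations are `p' = -U_q / 3`, `q' = U_p / 3` for the binary cubic
`U = a p³ + 3b p²q + 3c pq² + d q³`, and `F` is minus the Hessian covariant of `U`. Along the
flow, `F' = (F_q U_p - F_p U_q) / 3` is the Jacobian of `U` and `F`, i.e. the cubic covariant
`J` of `U`. Cayley's syzygy `J² = 4F³ + D U²` between the covariants of a binary
cubic then gives the Weierstrass equation.
-/

section BinaryCubic

variable {R : Type*} [CommRing R] (a b c d x y : R)

def cubicForm : R := a * x ^ 3 + 3 * b * x ^ 2 * y + 3 * c * x * y ^ 2 + d * y ^ 3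

def cubicDisc : R :=
  a ^ 2 * d ^ 2 - 3 * b ^ 2 * c ^ 2 + 4 * a * c ^ 3 + 4 * b ^ 3 * d - 6 * a * b * c * d

def cubicHessian : R :=
  (b ^ 2 - a * c) * x ^ 2 + (b * c - a * d) * x * y + (c ^ 2 - b * d) * y ^ 2

def cubicCovariant : R :=
  -(a ^ 2 * d - 3 * a * b * c + 2 * b ^ 3) * x ^ 3
    - 3 * (a * b * d + b ^ 2 * c - 2 * a * c ^ 2) * x ^ 2 * y
    + 3 * (b * c ^ 2 + a * c * d - 2 * b ^ 2 * d) * x * y ^ 2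
    + (a * d ^ 2 - 3 * b * c * d + 2 * c ^ 3) * y ^ 3

theorem cubicCovariant_sq :
    cubicCovariant a b c d x y ^ 2
      = 4 * cubicHessian a b c d x y ^ 3 + cubicDisc a b c d * cubicForm a b c d x y ^ 2 := by
  unfold cubicCovariant cubicHessian cubicDisc cubicForm
  ring

end BinaryCubic

theorem HasDerivAt.quadratic_form {p q : ℝ → ℝ} {p' q' t : ℝ} (hp : HasDerivAt p p' t)
    (hq : HasDerivAt q q' t) (A B C : ℝ) :
    HasDerivAt (fun t => A * p t ^ 2 + B * p t * q t + C * q t ^ 2)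
      (2 * A * p t * p' + B * (p' * q t + p t * q') + 2 * C * q t * q') t := by
  have h := (((hp.pow 2).const_mul A).add ((hp.mul hq).const_mul B)).add ((hq.pow 2).const_mul C)
  refine (h.congr_of_eventuallyEq (.of_forall fun s => ?_)).congr_deriv ?_
  · simp only [Pi.add_apply, Pi.mul_apply, Pi.pow_apply]
    ring
  · push_cast
    ring

theorem hasDerivAt_cubicHessian_of_hamilton {a b c d t : ℝ} {p q : ℝ → ℝ}
    (hp : HasDerivAt p (-(b * p t ^ 2 + 2 * c * p t * q t + d * q t ^ 2)) t)
    (hq : HasDerivAt q (a * p t ^ 2 + 2 * b * p t * q t + c * q t ^ 2) t) :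
    HasDerivAt (fun t => cubicHessian a b c d (p t) (q t))
      (cubicCovariant a b c d (p t) (q t)) t := by
  convert hp.quadratic_form hq (b ^ 2 - a * c) (b * c - a * d) (c ^ 2 - b * d) using 1
  · rfl
  · unfold cubicCovariant
    ring

theorem cubic_weierstrass_equation (a b c d : ℝ) (p q : ℝ → ℝ)
    (hp1 : Differentiable ℝ p) (hq1 : Differentiable ℝ q)
    (hp : ∀ t, deriv p t = -(b*(p t)^2 + 2*c*(p t)*(q t) + d*(q t)^2))
    (hq : ∀ t, deriv q t = a*(p t)^2 + 2*b*(p t)*(q t) + c*(q t)^2) :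
    ∀ t,
      (deriv (fun t =>
        (b^2 - a*c)*(p t)^2 + (b*c - a*d)*(p t)*(q t) + (c^2 - b*d)*(q t)^2) t)^2
      = 4 * ((b^2 - a*c)*(p t)^2 + (b*c - a*d)*(p t)*(q t) + (c^2 - b*d)*(q t)^2)^3
        + (a^2*d^2 - 3*b^2*c^2 + 4*a*c^3 + 4*b^3*d - 6*a*b*c*d)
          * (3 * ((1/3) * (a*(p t)^3 + 3*b*(p t)^2*(q t) + 3*c*(p t)*(q t)^2 + d*(q t)^3)))^2 := by
  intro t
  have hF := hasDerivAt_cubicHessian_of_hamilton (a := a) (b := b) (c := c) (d := d)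
    (hp t ▸ (hp1 t).hasDerivAt) (hq t ▸ (hq1 t).hasDerivAt)
  have hsyzygy := cubicCovariant_sq a b c d (p t) (q t)
  simp only [cubicHessian, cubicDisc, cubicForm] at hF hsyzygy
  rw [hF.deriv, hsyzygy]
  ring
end

section
/- Let psi(p,q) = (1/4)(a p^4 + 4b p^3 q + 6c p^2 q^2 + 4d p q^3 + e q^4). If p, q : ℝ → ℝ satisfy the Hamilton equations -p' = ∂psi/∂q, q' = ∂psi/∂p, then p'' = 3 G p and q'' = 3 G q, where G = (b^2 - ac) p^4 + 2(bc - ad) p^3 q + (3c^2 - 2bd - ae) p^2 q^2 + 2(cd - be) p q^3 + (d^2 - ce) q^4. -/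
/-!
With `ψ_p, ψ_q` the cubic partials of the quartic `ψ`, the equations of motion are
`p' = -ψ_q`, `q' = ψ_p`, so by the chain rule `p'' = ψ_pq ψ_q - ψ_qq ψ_p` and
`q'' = ψ_pq ψ_p - ψ_pp ψ_q`. Euler's relations for the cubic forms `ψ_p, ψ_q`,
`3 ψ_p = p ψ_pp + q ψ_pq` and `3 ψ_q = p ψ_pq + q ψ_qq`, collapse these to
`-p H / 3` and `-q H / 3`, where `H = ψ_pp ψ_qq - ψ_pq²` is the Hessian of `ψ`; and `H = -9 G`.
-/

namespace QuarticHamiltonian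

variable (a b c d e : ℝ)

/- First and second partial derivatives of `ψ(x, y) = (a x⁴ + 4b x³y + 6c x²y² + 4d xy³ + e y⁴) / 4`;
`covariantG` is the paper's `G`. -/
def partialP (x y : ℝ) : ℝ := a*x^3 + 3*b*x^2*y + 3*c*x*y^2 + d*y^3

def partialQ (x y : ℝ) : ℝ := b*x^3 + 3*c*x^2*y + 3*d*x*y^2 + e*y^3

def partialPP (x y : ℝ) : ℝ := 3 * (a*x^2 + 2*b*x*y + c*y^2)

def partialPQ (x y : ℝ) : ℝ := 3 * (b*x^2 + 2*c*x*y + d*y^2)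

def partialQQ (x y : ℝ) : ℝ := 3 * (c*x^2 + 2*d*x*y + e*y^2)

def covariantG (x y : ℝ) : ℝ :=
  (b^2 - a*c)*x^4 + 2*(b*c - a*d)*x^3*y + (3*c^2 - 2*b*d - a*e)*x^2*y^2
    + 2*(c*d - b*e)*x*y^3 + (d^2 - c*e)*y^4

section Algebra

variable (x y : ℝ)

theorem euler_partialP :
    3 * partialP a b c d x y = x * partialPP a b c x y + y * partialPQ b c d x y := by
  unfold partialP partialPP partialPQ; ring

theorem euler_partialQ :
    3 * partialQ b c d e x y = x * partialPQ b c d x y + y * partialQQ c d e x y := by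
  unfold partialQ partialPQ partialQQ; ring

theorem hessian_eq_covariantG :
    partialPP a b c x y * partialQQ c d e x y - partialPQ b c d x y ^ 2
      = -9 * covariantG a b c d e x y := by
  unfold partialPP partialQQ partialPQ covariantG; ring

theorem partialPQ_mul_partialQ_sub :
    partialPQ b c d x y * partialQ b c d e x y - partialQQ c d e x y * partialP a b c d x y
      = 3 * covariantG a b c d e x y * x := by
  linear_combination (partialPQ b c d x y * euler_partialQ b c d e x y
    - partialQQ c d e x y * euler_partialP a b c d x y
    - x * hessian_eq_covariantG a b c d e x y) / 3

theorem partialPQ_mul_partialP_sub :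
    partialPQ b c d x y * partialP a b c d x y - partialPP a b c x y * partialQ b c d e x y
      = 3 * covariantG a b c d e x y * y := by
  linear_combination (partialPQ b c d x y * euler_partialP a b c d x y
    - partialPP a b c x y * euler_partialQ b c d e x y
    - y * hessian_eq_covariantG a b c d e x y) / 3

end Algebra

section Calculus

variable {a b c d e} {p q : ℝ → ℝ} {p' q' t : ℝ}

theorem hasDerivAt_partialP_comp (hp : HasDerivAt p p' t) (hq : HasDerivAt q q' t) :
    HasDerivAt (fun s => partialP a b c d (p s) (q s))
      (partialPP a b c (p t) (q t) * p' + partialPQ b c d (p t) (q t) * q') t := by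
  refine (((((hp.pow 3).const_mul a).add (((hp.pow 2).const_mul (3*b)).mul hq)).add
    ((hp.const_mul (3*c)).mul (hq.pow 2))).add ((hq.pow 3).const_mul d)).congr_deriv ?_
  unfold partialPP partialPQ; simp only [Pi.pow_apply]; push_cast; ring

theorem hasDerivAt_partialQ_comp (hp : HasDerivAt p p' t) (hq : HasDerivAt q q' t) :
    HasDerivAt (fun s => partialQ b c d e (p s) (q s))
      (partialPQ b c d (p t) (q t) * p' + partialQQ c d e (p t) (q t) * q') t := by
  refine (((((hp.pow 3).const_mul b).add (((hp.pow 2).const_mul (3*c)).mul hq)).add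
    ((hp.const_mul (3*d)).mul (hq.pow 2))).add ((hq.pow 3).const_mul e)).congr_deriv ?_
  unfold partialPQ partialQQ; simp only [Pi.pow_apply]; push_cast; ring

variable (hp1 : Differentiable ℝ p) (hq1 : Differentiable ℝ q)
  (hp : ∀ t, deriv p t = -partialQ b c d e (p t) (q t))
  (hq : ∀ t, deriv q t = partialP a b c d (p t) (q t))
include hp1 hq1 hp hq

theorem deriv_deriv_fst_of_hamiltonian (t : ℝ) :
    deriv (deriv p) t = partialPQ b c d (p t) (q t) * partialQ b c d e (p t) (q t)
      - partialQQ c d e (p t) (q t) * partialP a b c d (p t) (q t) := by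
  have hP : HasDerivAt p (deriv p t) t := (hp1 t).hasDerivAt
  have hQ : HasDerivAt q (deriv q t) t := (hq1 t).hasDerivAt
  rw [funext hp, (hasDerivAt_partialQ_comp hP hQ).fun_neg.deriv, hp t, hq t]
  ring

theorem deriv_deriv_snd_of_hamiltonian (t : ℝ) :
    deriv (deriv q) t = partialPQ b c d (p t) (q t) * partialP a b c d (p t) (q t)
      - partialPP a b c (p t) (q t) * partialQ b c d e (p t) (q t) := by
  have hP : HasDerivAt p (deriv p t) t := (hp1 t).hasDerivAt
  have hQ : HasDerivAt q (deriv q t) t := (hq1 t).hasDerivAt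
  rw [funext hq, (hasDerivAt_partialP_comp hP hQ).deriv, hp t, hq t]
  ring

end Calculus

end QuarticHamiltonian

open QuarticHamiltonian in
theorem quartic_second_order_general (a b c d e : ℝ) (p q : ℝ → ℝ)
    (hp1 : Differentiable ℝ p) (hq1 : Differentiable ℝ q)
    (hp : ∀ t, deriv p t = -(b*(p t)^3 + 3*c*(p t)^2*(q t) + 3*d*(p t)*(q t)^2 + e*(q t)^3))
    (hq : ∀ t, deriv q t = a*(p t)^3 + 3*b*(p t)^2*(q t) + 3*c*(p t)*(q t)^2 + d*(q t)^3) :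
    ∀ t, deriv (deriv p) t
        = 3 * ((b^2 - a*c)*(p t)^4 + 2*(b*c - a*d)*(p t)^3*(q t)
          + (3*c^2 - 2*b*d - a*e)*(p t)^2*(q t)^2 + 2*(c*d - b*e)*(p t)*(q t)^3
          + (d^2 - c*e)*(q t)^4) * p t
      ∧ deriv (deriv q) t
        = 3 * ((b^2 - a*c)*(p t)^4 + 2*(b*c - a*d)*(p t)^3*(q t)
          + (3*c^2 - 2*b*d - a*e)*(p t)^2*(q t)^2 + 2*(c*d - b*e)*(p t)*(q t)^3
          + (d^2 - c*e)*(q t)^4) * q t := by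
  intro t
  exact ⟨(deriv_deriv_fst_of_hamiltonian hp1 hq1 hp hq t).trans
      (partialPQ_mul_partialQ_sub a b c d e (p t) (q t)),
    (deriv_deriv_snd_of_hamiltonian hp1 hq1 hp hq t).trans
      (partialPQ_mul_partialP_sub a b c d e (p t) (q t))⟩

theorem quartic_second_order (a b c d e : ℝ) (p q : ℝ → ℝ)
    (hp1 : Differentiable ℝ p) (hq1 : Differentiable ℝ q)
    (hp2 : Differentiable ℝ (deriv p)) (hq2 : Differentiable ℝ (deriv q))
    (hp : ∀ t, deriv p t = -(b*(p t)^3 + 3*c*(p t)^2*(q t) + 3*d*(p t)*(q t)^2 + e*(q t)^3))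
    (hq : ∀ t, deriv q t = a*(p t)^3 + 3*b*(p t)^2*(q t) + 3*c*(p t)*(q t)^2 + d*(q t)^3) :
    ∀ t, deriv (deriv p) t
        = 3 * ((b^2 - a*c)*(p t)^4 + 2*(b*c - a*d)*(p t)^3*(q t)
          + (3*c^2 - 2*b*d - a*e)*(p t)^2*(q t)^2 + 2*(c*d - b*e)*(p t)*(q t)^3
          + (d^2 - c*e)*(q t)^4) * p t
      ∧ deriv (deriv q) t
        = 3 * ((b^2 - a*c)*(p t)^4 + 2*(b*c - a*d)*(p t)^3*(q t)
          + (3*c^2 - 2*b*d - a*e)*(p t)^2*(q t)^2 + 2*(c*d - b*e)*(p t)*(q t)^3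
          + (d^2 - c*e)*(q t)^4) * q t :=
  quartic_second_order_general a b c d e p q hp1 hq1 hp hq
end

section
/- Let p, q : ℝ → ℝ satisfy the Hamilton equations p' = -(b p^3 + 3c p^2 q + 3d p q^2 + e q^3), q' = a p^3 + 3b p^2 q + 3c p q^2 + d q^3, let G = (b^2 - ac) p^4 + 2(bc - ad) p^3 q + (3c^2 - 2bd - ae) p^2 q^2 + 2(cd - be) p q^3 + (d^2 - ce) q^4, set F = 4G, psi = (1/4)(a p^4 + 4b p^3 q + 6c p^2 q^2 + 4d p q^3 + e q^4), S = ae - 4bd + 3c^2, T = ace + 2bcd - ad^2 - b^2 e - c^3. Then along the curve, (F')^2 = 4 F^3 - g_2 F - g_3 with g_2 = S (16 psi)^2 and g_3 = T (16 psi)^3. -/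
/-!
The equations are Hamilton's equations for `ψ = f / 4`, where
`f = a x⁴ + 4b x³y + 6c x²y² + 4d xy³ + e y⁴`. Along a solution the Hessian covariant `H = G`
of `f` therefore changes at the rate `J = (H_y f_x - H_x f_y) / 4`, the Jacobian (sextic)
covariant of `f` and `H`. Cayley's syzygy `J² = 16 H³ - 4 S f² H - 4 T f³` among the covariants
of a binary quartic is then the claimed equation, since `F = 4H` and `16 ψ = 4f`.
-/

structure BinaryQuartic where
  c₀ : ℝ
  c₁ : ℝ
  c₂ : ℝ
  c₃ : ℝ
  c₄ : ℝ

namespace BinaryQuartic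

section Calculus

variable (f : BinaryQuartic) (x y : ℝ)

def eval : ℝ := f.c₀*x^4 + f.c₁*x^3*y + f.c₂*x^2*y^2 + f.c₃*x*y^3 + f.c₄*y^4

def derivX : ℝ := 4*f.c₀*x^3 + 3*f.c₁*x^2*y + 2*f.c₂*x*y^2 + f.c₃*y^3

def derivY : ℝ := f.c₁*x^3 + 2*f.c₂*x^2*y + 3*f.c₃*x*y^2 + 4*f.c₄*y^3

theorem hasDerivAt_eval_comp {p q : ℝ → ℝ} {p' q' t : ℝ}
    (hp : HasDerivAt p p' t) (hq : HasDerivAt q q' t) :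
    HasDerivAt (fun s => f.eval (p s) (q s))
      (f.derivX (p t) (q t) * p' + f.derivY (p t) (q t) * q') t := by
  have h := (((((hp.pow 4).const_mul f.c₀).add (((hp.pow 3).mul hq).const_mul f.c₁)).add
    (((hp.pow 2).mul (hq.pow 2)).const_mul f.c₂)).add ((hp.mul (hq.pow 3)).const_mul f.c₃)).add
    ((hq.pow 4).const_mul f.c₄)
  refine (h.congr_of_eventuallyEq (Filter.Eventually.of_forall fun s => ?_)).congr_deriv ?_
  · simp only [eval, Pi.add_apply, Pi.mul_apply, Pi.pow_apply]; ring
  · simp only [derivX, derivY, Pi.pow_apply]; push_cast; ring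

end Calculus

section Covariants

variable (a b c d e : ℝ)

/-- The binomial weights are those in which `invariantS` and `invariantT` take their classical
form. -/
def ofBinomial : BinaryQuartic := ⟨a, 4*b, 6*c, 4*d, e⟩

/-- Minus the Hessian of `ofBinomial a b c d e`, divided by `144`. -/
def hessian : BinaryQuartic :=
  ⟨b^2 - a*c, 2*(b*c - a*d), 3*c^2 - 2*b*d - a*e, 2*(c*d - b*e), d^2 - c*e⟩

def invariantS : ℝ := a*e - 4*b*d + 3*c^2

def invariantT : ℝ := a*c*e + 2*b*c*d - a*d^2 - b^2*e - c^3

/-- The rate of change of `hessian` along the Hamiltonian flow of `ofBinomial a b c d e / 4`. -/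
noncomputable def sexticCovariant (x y : ℝ) : ℝ :=
  ((hessian a b c d e).derivY x y * (ofBinomial a b c d e).derivX x y
    - (hessian a b c d e).derivX x y * (ofBinomial a b c d e).derivY x y) / 4

theorem sexticCovariant_sq (x y : ℝ) :
    sexticCovariant a b c d e x y ^ 2 =
      16 * (hessian a b c d e).eval x y ^ 3
        - 4 * invariantS a b c d e * (ofBinomial a b c d e).eval x y ^ 2 * (hessian a b c d e).eval x y
        - 4 * invariantT a b c d e * (ofBinomial a b c d e).eval x y ^ 3 := by
  simp only [sexticCovariant, eval, derivX, derivY, hessian, ofBinomial, invariantS, invariantT]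
  ring

theorem hasDerivAt_hessian_eval_of_hamiltonian {p q : ℝ → ℝ} {t : ℝ}
    (hp : HasDerivAt p (-(ofBinomial a b c d e).derivY (p t) (q t) / 4) t)
    (hq : HasDerivAt q ((ofBinomial a b c d e).derivX (p t) (q t) / 4) t) :
    HasDerivAt (fun s => (hessian a b c d e).eval (p s) (q s))
      (sexticCovariant a b c d e (p t) (q t)) t := by
  convert (hessian a b c d e).hasDerivAt_eval_comp hp hq using 1
  rw [sexticCovariant]
  ring

end Covariants

end BinaryQuartic

open BinaryQuartic in
theorem quartic_weierstrass_equation (a b c d e : ℝ) (p q : ℝ → ℝ)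
    (hp1 : Differentiable ℝ p) (hq1 : Differentiable ℝ q)
    (hp : ∀ t, deriv p t = -(b*(p t)^3 + 3*c*(p t)^2*(q t) + 3*d*(p t)*(q t)^2 + e*(q t)^3))
    (hq : ∀ t, deriv q t = a*(p t)^3 + 3*b*(p t)^2*(q t) + 3*c*(p t)*(q t)^2 + d*(q t)^3) :
    ∀ t,
      let G := fun t => (b^2 - a*c)*(p t)^4 + 2*(b*c - a*d)*(p t)^3*(q t)
        + (3*c^2 - 2*b*d - a*e)*(p t)^2*(q t)^2 + 2*(c*d - b*e)*(p t)*(q t)^3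
        + (d^2 - c*e)*(q t)^4
      let F := fun t => 4 * G t
      let psi := (1/4) * (a*(p t)^4 + 4*b*(p t)^3*(q t) + 6*c*(p t)^2*(q t)^2
        + 4*d*(p t)*(q t)^3 + e*(q t)^4)
      let S := a*e - 4*b*d + 3*c^2
      let T := a*c*e + 2*b*c*d - a*d^2 - b^2*e - c^3
      (deriv F t)^2 = 4*(F t)^3 - (S*(16*psi)^2)*(F t) - T*(16*psi)^3 := by
  intro t G F psi S T
  have hP : HasDerivAt p (-(ofBinomial a b c d e).derivY (p t) (q t) / 4) t :=
    (hp1 t).hasDerivAt.congr_deriv (by rw [hp, derivY, ofBinomial]; ring)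
  have hQ : HasDerivAt q ((ofBinomial a b c d e).derivX (p t) (q t) / 4) t :=
    (hq1 t).hasDerivAt.congr_deriv (by rw [hq, derivX, ofBinomial]; ring)
  have hF : deriv F t = 4 * sexticCovariant a b c d e (p t) (q t) :=
    ((hasDerivAt_hessian_eval_of_hamiltonian a b c d e hP hQ).const_mul 4).deriv
  have hFt : F t = 4 * (hessian a b c d e).eval (p t) (q t) := rfl
  have hpsi : 16 * psi = 4 * (ofBinomial a b c d e).eval (p t) (q t) := by
    simp only [psi, eval, ofBinomial]; ring
  have hsyzygy := sexticCovariant_sq a b c d e (p t) (q t)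
  rw [invariantS, invariantT] at hsyzygy
  rw [hF, hFt, hpsi]
  linear_combination 16 * hsyzygy
end
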